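/- Let A = UΣVᵀ with U ∈ ℝ^{n×k} having orthonormal columns, Σ a k×k matrix, and V ∈ ℝ^{c×k}, and let a ∈ ℝ^{1×c}. If [ΣVᵀ ; a] = Ũ Σ̃ Ṽᵀ is an SVD of the stacked matrix (Ũ with orthonormal columns), then ([[U,0],[0,1]] Ũ) Σ̃ Ṽᵀ is a factorization of [A ; a] where the left factor [[U,0],[0,1]] Ũ has orthonormal columns. -/

import Mathlib

open Matrix

namespace Matrix

variable {R : Type*} [CommSemiring R] {l m n p q : Type*}

theorem transpose_mul_self_mul_eq_one [Fintype m] [Fintype n] [DecidableEq n]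
    [DecidableEq p] {Q : Matrix m n R} {P : Matrix n p R}
    (hQ : Qᵀ * Q = 1) (hP : Pᵀ * P = 1) : (Q * P)ᵀ * (Q * P) = 1 := by
  rw [transpose_mul, Matrix.mul_assoc, ← Matrix.mul_assoc Qᵀ, hQ, Matrix.one_mul, hP]

theorem transpose_mul_self_fromBlocks_eq_one [Fintype l] [Fintype m] [DecidableEq n]
    [DecidableEq p] {U : Matrix m n R} {W : Matrix l p R}
    (hU : Uᵀ * U = 1) (hW : Wᵀ * W = 1) : (fromBlocks U 0 0 W)ᵀ * fromBlocks U 0 0 W = 1 := by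
  simp [fromBlocks_transpose, fromBlocks_multiply, hU, hW]

theorem fromRows_mul_eq_fromBlocks_mul_fromRows [Fintype n] [Fintype p] [DecidableEq p]
    (U : Matrix m n R) (B : Matrix n q R) (a : Matrix p q R) :
    fromRows (U * B) a = fromBlocks U 0 0 (1 : Matrix p p R) * fromRows B a := by
  simp [fromBlocks_mul_fromRows]

end Matrix

theorem stmt4 (n c k k' : ℕ)
    (A : Matrix (Fin n) (Fin c) ℝ) (a : Matrix (Fin 1) (Fin c) ℝ)
    (U : Matrix (Fin n) (Fin k) ℝ) (S : Matrix (Fin k) (Fin k) ℝ)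
    (V : Matrix (Fin c) (Fin k) ℝ)
    (hU : Uᵀ * U = 1)
    (hA : A = U * S * Vᵀ)
    (Ut : Matrix (Fin k ⊕ Fin 1) (Fin k') ℝ)
    (St : Matrix (Fin k') (Fin k') ℝ) (Vt : Matrix (Fin c) (Fin k') ℝ)
    (hUt : Utᵀ * Ut = 1)
    (hSVD : Matrix.fromRows (S * Vᵀ) a = Ut * St * Vtᵀ) :
    Matrix.fromRows A a
        = (Matrix.fromBlocks U 0 0 (1 : Matrix (Fin 1) (Fin 1) ℝ) * Ut) * St * Vtᵀ
      ∧ (Matrix.fromBlocks U 0 0 (1 : Matrix (Fin 1) (Fin 1) ℝ) * Ut)ᵀ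
          * (Matrix.fromBlocks U 0 0 (1 : Matrix (Fin 1) (Fin 1) ℝ) * Ut) = 1 := by
  have hLift : Matrix.fromRows A a =
      fromBlocks U 0 0 (1 : Matrix (Fin 1) (Fin 1) ℝ) * Matrix.fromRows (S * Vᵀ) a := by
    rw [hA, Matrix.mul_assoc, fromRows_mul_eq_fromBlocks_mul_fromRows]
  have hOne : (1 : Matrix (Fin 1) (Fin 1) ℝ)ᵀ * 1 = 1 := by simp
  refine ⟨?_, transpose_mul_self_mul_eq_one (transpose_mul_self_fromBlocks_eq_one hU hOne) hUt⟩
  rw [hLift, hSVD]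
  simp only [Matrix.mul_assoc]
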